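/- For every θ ∈ ℝ: ∫₀^{2π} |cos φ · cos(θ − φ)| dφ = 2·( |sin θ| + cos θ · arcsin(cos θ) ), and this quantity is at least 2. -/

import Mathlib

/-!
The integrand is `π`-periodic in `φ`, so the integral over `[0, 2π]` is twice the integral over
the half-period `[θ - π/2, θ + π/2]`, on which `cos (θ - φ) ≥ 0`. For `θ ∈ [0, π]` the factor
`cos φ` changes sign exactly once there, at `φ = π/2`, and the antiderivative
`(φ cos θ + sin φ cos (θ - φ)) / 2` of `cos φ cos (θ - φ)` gives `2 (sin θ + (π/2 - θ) cos θ)`,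
which is the right-hand side because `arcsin (cos θ) = π/2 - θ` there. Both sides are
`π`-periodic in `θ`, so they agree everywhere. The lower bound follows from `sin² θ ≤ |sin θ|`
and `cos² θ ≤ cos θ · arcsin (cos θ)` (as `|x| = |sin (arcsin x)| ≤ |arcsin x|`).
-/

open Real Set

theorem Function.Periodic.eq_of_eqOn_Ico {α : Type*} {f g : ℝ → α} {c : ℝ}
    (hf : Function.Periodic f c) (hg : Function.Periodic g c) (hc : 0 < c)
    (h : EqOn f g (Ico 0 c)) : f = g := by
  funext x
  have hfg : Function.Periodic (fun x => (f x, g x)) c := fun x => by simp only [hf x, hg x]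
  obtain ⟨y, hy, hxy⟩ := hfg.exists_mem_Ico₀ hc x
  simp only [Prod.mk.injEq] at hxy
  rw [hxy.1, hxy.2, h hy]

theorem Function.Periodic.intervalIntegral_zero_two_mul {f : ℝ → ℝ} {T : ℝ}
    (hf : Function.Periodic f T)
    (h_int : ∀ a b, IntervalIntegrable f MeasureTheory.volume a b) (t : ℝ) :
    ∫ x in 0..2 * T, f x = 2 * ∫ x in t..t + T, f x := by
  have h := hf.intervalIntegral_add_zsmul_eq 2 0 h_int
  simp only [zero_add, zsmul_eq_mul, Int.cast_ofNat] at h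
  have h_shift := hf.intervalIntegral_add_eq 0 t
  rw [zero_add] at h_shift
  rw [h, h_shift]

theorem integral_cos_mul_cos_sub (θ a b : ℝ) :
    ∫ φ in a..b, cos φ * cos (θ - φ) =
      ((b - a) * cos θ + sin b * cos (θ - b) - sin a * cos (θ - a)) / 2 := by
  have hderiv : ∀ φ, HasDerivAt (fun φ => (φ * cos θ + sin φ * cos (θ - φ)) / 2)
      (cos φ * cos (θ - φ)) φ := by
    intro φ
    have h := (((hasDerivAt_id φ).mul_const (cos θ)).add
      ((hasDerivAt_sin φ).mul ((hasDerivAt_cos (θ - φ)).comp φ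
        ((hasDerivAt_id φ).const_sub θ)))).div_const 2
    refine h.congr_deriv ?_
    rw [show cos θ = cos (φ + (θ - φ)) by ring_nf, cos_add]
    simp only [Function.comp]
    ring
  rw [intervalIntegral.integral_eq_sub_of_hasDerivAt (fun φ _ => hderiv φ)
    ((by fun_prop : Continuous fun φ => cos φ * cos (θ - φ)).intervalIntegrable _ _)]
  ring

theorem periodic_abs_cos_mul_cos_sub (θ : ℝ) :
    Function.Periodic (fun φ => |cos φ * cos (θ - φ)|) π := fun φ => by
  dsimp only
  rw [cos_add_pi, show θ - (φ + π) = θ - φ - π by ring, cos_sub_pi, neg_mul_neg]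

theorem integral_abs_cos_mul_cos_sub_of_mem_Icc {θ : ℝ} (hθ : θ ∈ Icc 0 π) :
    ∫ φ in 0..2 * π, |cos φ * cos (θ - φ)| = 2 * (sin θ + (π / 2 - θ) * cos θ) := by
  obtain ⟨hθ₀, hθπ⟩ := hθ
  have h_int : ∀ a b,
      IntervalIntegrable (fun φ => |cos φ * cos (θ - φ)|) MeasureTheory.volume a b :=
    fun a b => (by fun_prop : Continuous fun φ => |cos φ * cos (θ - φ)|).intervalIntegrable a b
  have hcos_sub : ∀ φ ∈ Icc (θ - π / 2) (θ + π / 2), 0 ≤ cos (θ - φ) := fun φ hφ =>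
    cos_nonneg_of_mem_Icc ⟨by linarith [hφ.2], by linarith [hφ.1]⟩
  have h_left : ∫ φ in (θ - π / 2)..(π / 2), |cos φ * cos (θ - φ)| =
      ∫ φ in (θ - π / 2)..(π / 2), cos φ * cos (θ - φ) := by
    refine intervalIntegral.integral_congr fun φ hφ => ?_
    rw [uIcc_of_le (by linarith)] at hφ
    exact abs_of_nonneg (mul_nonneg (cos_nonneg_of_mem_Icc ⟨by linarith [hφ.1], hφ.2⟩)
      (hcos_sub φ ⟨hφ.1, by linarith [hφ.2]⟩))
  have h_right : ∫ φ in (π / 2)..(θ + π / 2), |cos φ * cos (θ - φ)| =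
      -∫ φ in (π / 2)..(θ + π / 2), cos φ * cos (θ - φ) := by
    rw [← intervalIntegral.integral_neg]
    refine intervalIntegral.integral_congr fun φ hφ => ?_
    rw [uIcc_of_le (by linarith)] at hφ
    exact abs_of_nonpos (mul_nonpos_of_nonpos_of_nonneg
      (cos_nonpos_of_pi_div_two_le_of_le hφ.1 (by linarith [hφ.2]))
      (hcos_sub φ ⟨by linarith [hφ.1], hφ.2⟩))
  rw [(periodic_abs_cos_mul_cos_sub θ).intervalIntegral_zero_two_mul h_int (θ - π / 2),
    show θ - π / 2 + π = θ + π / 2 by ring,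
    ← intervalIntegral.integral_add_adjacent_intervals (h_int _ (π / 2)) (h_int _ _),
    h_left, h_right, integral_cos_mul_cos_sub, integral_cos_mul_cos_sub]
  simp only [sub_sub_cancel, sub_add_cancel_left, cos_neg, cos_pi_div_two, sin_pi_div_two,
    cos_sub_pi_div_two]
  ring

theorem arcsin_cos_of_mem_Icc {θ : ℝ} (hθ : θ ∈ Icc 0 π) : arcsin (cos θ) = π / 2 - θ := by
  rw [arcsin_eq_pi_div_two_sub_arccos, arccos_cos hθ.1 hθ.2]

theorem periodic_integral_abs_cos_mul_cos_sub :
    Function.Periodic (fun θ => ∫ φ in 0..2 * π, |cos φ * cos (θ - φ)|) π := fun θ => by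
  refine intervalIntegral.integral_congr fun φ _ => ?_
  rw [show θ + π - φ = θ - φ + π by ring, cos_add_pi, mul_neg, abs_neg]

theorem periodic_abs_sin_add_cos_mul_arcsin_cos :
    Function.Periodic (fun θ => 2 * (|sin θ| + cos θ * arcsin (cos θ))) π := fun θ => by
  dsimp only
  rw [sin_add_pi, cos_add_pi, abs_neg, arcsin_neg, neg_mul_neg]

theorem sq_le_mul_arcsin {x : ℝ} (hx : |x| ≤ 1) : x ^ 2 ≤ x * arcsin x := by
  obtain ⟨hx₁, hx₂⟩ := abs_le.1 hx
  have h_nonneg : 0 ≤ x * arcsin x := by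
    rcases le_total 0 x with h | h
    · exact mul_nonneg h (arcsin_nonneg.2 h)
    · exact mul_nonneg_of_nonpos_of_nonpos h (arcsin_nonpos.2 h)
  have h_abs : |x| ≤ |arcsin x| := by
    simpa only [sin_arcsin hx₁ hx₂] using abs_sin_le_abs (x := arcsin x)
  calc x ^ 2 = |x| * |x| := by rw [abs_mul_abs_self, sq]
    _ ≤ |x| * |arcsin x| := mul_le_mul_of_nonneg_left h_abs (abs_nonneg x)
    _ = x * arcsin x := by rw [← abs_mul, abs_of_nonneg h_nonneg]

theorem two_le_two_mul_abs_sin_add_cos_mul_arcsin_cos (θ : ℝ) :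
    2 ≤ 2 * (|sin θ| + cos θ * arcsin (cos θ)) := by
  have h_sin : sin θ ^ 2 ≤ |sin θ| := by
    rw [← sq_abs, sq]
    exact mul_le_of_le_one_left (abs_nonneg _) (abs_sin_le_one θ)
  have h_cos := sq_le_mul_arcsin (abs_cos_le_one θ)
  nlinarith [sin_sq_add_cos_sq θ]

/-- For every `θ ∈ ℝ`:
`∫₀^{2π} |cos φ · cos(θ − φ)| dφ = 2 (|sin θ| + cos θ · arcsin (cos θ))`, and this
quantity is at least `2`. -/
theorem stmt_14 (θ : ℝ) :
    (∫ φ in (0:ℝ)..(2 * Real.pi), |Real.cos φ * Real.cos (θ - φ)| =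
      2 * (|Real.sin θ| + Real.cos θ * Real.arcsin (Real.cos θ))) ∧
    2 ≤ ∫ φ in (0:ℝ)..(2 * Real.pi), |Real.cos φ * Real.cos (θ - φ)| := by
  have h_eq : (fun θ => ∫ φ in 0..2 * π, |cos φ * cos (θ - φ)|) =
      fun θ => 2 * (|sin θ| + cos θ * arcsin (cos θ)) := by
    refine periodic_integral_abs_cos_mul_cos_sub.eq_of_eqOn_Ico
      periodic_abs_sin_add_cos_mul_arcsin_cos pi_pos fun θ hθ => ?_
    have hθ' : θ ∈ Icc 0 π := Ico_subset_Icc_self hθ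
    dsimp only
    rw [integral_abs_cos_mul_cos_sub_of_mem_Icc hθ', arcsin_cos_of_mem_Icc hθ',
      abs_of_nonneg (sin_nonneg_of_mem_Icc hθ')]
    ring
  have h := congrFun h_eq θ
  exact ⟨h, h ▸ two_le_two_mul_abs_sin_add_cos_mul_arcsin_cos θ⟩
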